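/- arXiv:2409.12867 — 4 statements merged into one kernel-verified Lean document; each statement's English description precedes it below -/
import Mathlib

section
/- Let f : U → ℂ be a holomorphic function on a connected open set U ⊆ ℂⁿ with U ∩ S₁ⁿ nonempty (where n ≥ 1). If f vanishes at every point of U ∩ S₁ⁿ, then f is identically zero on U. -/
open Metric Set Filter Function

private lemma poly_prop (n : ℕ) (f : (Fin n → ℂ) → ℂ) (c : Fin n → ℂ) (r : ℝ) (hr : 0 < r)
    (hf : DifferentiableOn ℂ f (Metric.ball c r))
    (S : Fin n → Set ℂ) (hS : ∀ i, S i ⊆ Metric.ball (c i) r)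
    (a : Fin n → ℂ) (ha : ∀ i, a i ∈ Metric.ball (c i) r)
    (hacc : ∀ i, ∃ᶠ w in nhdsWithin (a i) {a i}ᶜ, w ∈ S i)
    (hz : ∀ z ∈ Metric.ball c r, (∀ i, z i ∈ S i) → f z = 0) :
    ∀ z ∈ Metric.ball c r, f z = 0 := by
  have key : ∀ k : ℕ, ∀ z ∈ Metric.ball c r, (∀ i : Fin n, k ≤ i.val → z i ∈ S i) → f z = 0 := by
    intro k
    induction k with
    | zero => exact fun z hzb h => hz z hzb fun i => h i (Nat.zero_le _)
    | succ k ih =>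
      intro z hzb h
      by_cases hk : k < n
      · set j : Fin n := ⟨k, hk⟩ with hj
        have hmaps : ∀ u ∈ Metric.ball (c j) r, Function.update z j u ∈ Metric.ball c r := by
          intro u hu
          rw [Metric.mem_ball, dist_pi_lt_iff hr]
          intro i
          rcases eq_or_ne i j with rfl | hij
          · simpa using hu
          · rw [Function.update_of_ne hij]
            exact lt_of_le_of_lt (dist_le_pi_dist z c i) (Metric.mem_ball.mp hzb)
        have hupd : Differentiable ℂ (fun u : ℂ => Function.update z j u) := by
          apply differentiable_pi.mpr
          intro i
          rcases eq_or_ne i j with rfl | hij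
          · simpa using differentiable_id
          · simpa [Function.update_of_ne hij] using differentiable_const (z i)
        have hgd : DifferentiableOn ℂ (fun u : ℂ => f (Function.update z j u))
            (Metric.ball (c j) r) := hf.comp hupd.differentiableOn hmaps
        have hga : AnalyticOnNhd ℂ (fun u : ℂ => f (Function.update z j u))
            (Metric.ball (c j) r) := hgd.analyticOnNhd Metric.isOpen_ball
        have hfreq : ∃ᶠ w in nhdsWithin (a j) {a j}ᶜ, f (Function.update z j w) = 0 := by
          refine (hacc j).mono fun w hw => ?_
          refine ih (Function.update z j w) (hmaps w (hS j hw)) fun i hi => ?_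
          rcases eq_or_ne i j with rfl | hij
          · rwa [Function.update_self]
          · rw [Function.update_of_ne hij]
            refine h i ?_
            have : i.val ≠ k := fun hik => hij (Fin.ext hik)
            omega
        have heq := hga.eqOn_zero_of_preconnected_of_frequently_eq_zero
          (convex_ball (c j) r).isPreconnected (ha j) hfreq
        have hzj : z j ∈ Metric.ball (c j) r :=
          Metric.mem_ball.mpr (lt_of_le_of_lt (dist_le_pi_dist z c j) (Metric.mem_ball.mp hzb))
        have := heq hzj
        simpa [Function.update_eq_self] using this
      · exact ih z hzb fun i hi => absurd (lt_of_le_of_lt hi i.isLt) hk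
  exact fun z hzb => key n z hzb fun i hi => absurd hi (Nat.not_le.mpr i.isLt)

private lemma circle_freq (x : ℂ) (hx : ‖x‖ = 1) :
    ∃ᶠ w in nhdsWithin x {x}ᶜ, ‖w‖ = 1 := by
  have hx0 : x ≠ 0 := by intro h; rw [h] at hx; simp at hx
  set t : ℕ → ℝ := fun m => ((m : ℝ) + 1)⁻¹ with ht
  set u : ℕ → ℂ := fun m => x * Complex.exp ((t m : ℂ) * Complex.I) with hu
  have htend : Tendsto u atTop (nhdsWithin x {x}ᶜ) := by
    apply tendsto_nhdsWithin_iff.mpr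
    constructor
    · have h0 : Tendsto t atTop (nhds 0) := by
        simpa [ht, one_div] using (tendsto_one_div_add_atTop_nhds_zero_nat :
          Tendsto (fun n : ℕ => 1 / ((n : ℝ) + 1)) atTop (nhds 0))
      have h1 : Tendsto (fun m : ℕ => ((t m : ℝ) : ℂ)) atTop (nhds ((0 : ℝ) : ℂ)) :=
        (Complex.continuous_ofReal.tendsto _).comp h0
      have h3 : Tendsto u atTop (nhds (x * Complex.exp (((0 : ℝ) : ℂ) * Complex.I))) :=
        Tendsto.const_mul x ((Complex.continuous_exp.tendsto _).comp (h1.mul_const Complex.I))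
      simpa using h3
    · filter_upwards with m
      intro hmem
      have hmem' : u m = x := hmem
      have hexp : Complex.exp ((t m : ℂ) * Complex.I) = 1 := by
        refine mul_left_cancel₀ hx0 ?_
        rw [mul_one]; exact hmem'
      have hre : Real.cos (t m) = 1 := by
        have h4 := congrArg Complex.re hexp
        rwa [Complex.exp_ofReal_mul_I_re, Complex.one_re] at h4
      have hpos : (0 : ℝ) < t m := by positivity
      have hle : t m ≤ 1 := by
        rw [ht]
        simp only
        rw [inv_le_one_iff₀]; right; linarith [Nat.cast_nonneg (α := ℝ) m]
      have hpi : (3 : ℝ) < Real.pi := Real.pi_gt_three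
      have := (Real.cos_eq_one_iff_of_lt_of_lt (by linarith) (by linarith)).mp hre
      linarith
  exact htend.frequently (Frequently.of_forall fun m => by
    simp [hu, map_mul, hx, Complex.norm_exp_ofReal_mul_I])

theorem stmt_6 (n : ℕ) (hn : 1 ≤ n) (U : Set (Fin n → ℂ)) (hU : IsOpen U)
    (hconn : IsConnected U) (f : (Fin n → ℂ) → ℂ) (hf : DifferentiableOn ℂ f U)
    (hne : (U ∩ {z | ∀ i, ‖z i‖ = 1}).Nonempty)
    (hvan : ∀ z ∈ U ∩ {z | ∀ i, ‖z i‖ = 1}, f z = 0) :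
    ∀ z ∈ U, f z = 0 := by
  set V : Set (Fin n → ℂ) := {z | ∀ᶠ w in nhds z, f w = 0} with hVdef
  have hVopen : IsOpen V := isOpen_setOf_eventually_nhds
  -- V meets U (at the torus point)
  obtain ⟨z₀, hz₀U, hz₀T⟩ := hne
  obtain ⟨r, hr, hball⟩ := Metric.isOpen_iff.mp hU z₀ hz₀U
  have hz₀V : z₀ ∈ V := by
    have h0 : ∀ z ∈ Metric.ball z₀ r, f z = 0 := by
      refine poly_prop n f z₀ r hr (hf.mono hball)
        (fun i => {w | ‖w‖ = 1} ∩ Metric.ball (z₀ i) r)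
        (fun i => inter_subset_right) z₀ (fun i => Metric.mem_ball_self hr)
        (fun i => ?_) (fun z hzb hcs => hvan z ⟨hball hzb, fun i => (hcs i).1⟩)
      have h1 : ∃ᶠ w in nhdsWithin (z₀ i) {z₀ i}ᶜ, ‖w‖ = 1 :=
        circle_freq (z₀ i) (hz₀T i)
      have h2 : ∀ᶠ w in nhdsWithin (z₀ i) {z₀ i}ᶜ, w ∈ Metric.ball (z₀ i) r :=
        Filter.Eventually.filter_mono nhdsWithin_le_nhds (Metric.ball_mem_nhds _ hr)
      exact (h1.and_eventually h2).mono fun w hw => ⟨hw.1, hw.2⟩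
    exact Filter.eventually_of_mem (Metric.ball_mem_nhds _ hr) h0
  -- closure V ∩ U ⊆ V
  have hclosed : closure V ∩ U ⊆ V := by
    rintro z ⟨hzc, hzU⟩
    obtain ⟨ρ, hρ, hρball⟩ := Metric.isOpen_iff.mp hU z hzU
    obtain ⟨z₁, hz₁V, hz₁d⟩ := Metric.mem_closure_iff.mp hzc (ρ / 2) (by positivity)
    rw [dist_comm] at hz₁d
    obtain ⟨ε, hε, hεball⟩ := Metric.eventually_nhds_iff_ball.mp hz₁V
    set ε' := min ε (ρ / 2) with hε'def
    have hε' : 0 < ε' := lt_min hε (by positivity)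
    have h0 : ∀ w ∈ Metric.ball z ρ, f w = 0 := by
      refine poly_prop n f z ρ hρ (hf.mono hρball)
        (fun i => Metric.ball (z₁ i) ε') (fun i => ?_) z₁ (fun i => ?_) (fun i => ?_)
        (fun w hwb hws => ?_)
      · intro w hw
        have h1 : dist w (z₁ i) < ε' := Metric.mem_ball.mp hw
        have h2 : dist (z₁ i) (z i) ≤ dist z₁ z := dist_le_pi_dist z₁ z i
        have : dist w (z i) ≤ dist w (z₁ i) + dist (z₁ i) (z i) := dist_triangle _ _ _
        have : dist w (z i) < ε' + ρ / 2 := by linarith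
        exact Metric.mem_ball.mpr (by
          have : ε' ≤ ρ / 2 := min_le_right _ _
          linarith)
      · have h2 : dist (z₁ i) (z i) ≤ dist z₁ z := dist_le_pi_dist z₁ z i
        exact Metric.mem_ball.mpr (by linarith)
      · have : ∀ᶠ w in nhdsWithin (z₁ i) {z₁ i}ᶜ, w ∈ Metric.ball (z₁ i) ε' :=
          Filter.Eventually.filter_mono nhdsWithin_le_nhds (Metric.ball_mem_nhds _ hε')
        exact this.frequently
      · have : dist w z₁ < ε' := (dist_pi_lt_iff hε').mpr fun i => Metric.mem_ball.mp (hws i)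
        exact hεball w (Metric.mem_ball.mpr (lt_of_lt_of_le this (min_le_left _ _)))
    exact Filter.eventually_of_mem (Metric.ball_mem_nhds _ hρ) h0
  have hUV : U ⊆ V :=
    hconn.isPreconnected.subset_of_closure_inter_subset hVopen ⟨z₀, hz₀U, hz₀V⟩ hclosed
  exact fun z hz => (hUV hz).self_of_nhds
end

section
/- Let p, q ∈ ℂ[z₁,…,zₙ] be nonzero polynomials, and suppose that for all z ∈ S₁ⁿ with q(z) ≠ 0 we have |p(z)/q(z)| = 1. Then the identity p(z)·p̄(z⁻¹) = q(z)·q̄(z⁻¹) holds as an identity of Laurent polynomials in ℂ[z₁^{±1},…,zₙ^{±1}]. -/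
open MvPolynomial Complex

lemma circle_infinite : {x : ℂ | ‖x‖ = 1}.Infinite := by
  haveI : Infinite (Set.Ioo (0:ℝ) 1) := Set.Ioo.infinite (by norm_num)
  apply Set.infinite_of_injective_forall_mem
    (f := fun t : Set.Ioo (0:ℝ) 1 => Complex.exp (t * Complex.I))
  · rintro ⟨a, ha⟩ ⟨b, hb⟩ hab
    simp only at hab
    rw [Complex.exp_eq_exp_iff_exists_int] at hab
    obtain ⟨k, hk⟩ := hab
    have hc : (a : ℂ) = b + k * (2 * Real.pi) := by
      have h2 : (a : ℂ) * I = (b + k * (2*Real.pi)) * I := by rw [hk]; ring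
      exact mul_right_cancel₀ Complex.I_ne_zero h2
    have hr : (a : ℝ) = b + k * (2 * Real.pi) := by exact_mod_cast hc
    have hk0 : k = 0 := by
      by_contra hk0
      have h1 : (1:ℝ) ≤ |(k:ℝ)| := by exact_mod_cast Int.one_le_abs (by exact_mod_cast hk0)
      have : |a - b| = |(k:ℝ)| * (2 * Real.pi) := by
        rw [hr]; rw [show b + (k:ℝ) * (2 * Real.pi) - b = (k:ℝ) * (2 * Real.pi) by ring, abs_mul, abs_of_pos (by positivity : (0:ℝ) < 2 * Real.pi)]
      have hab' : |a - b| < 1 := by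
        rw [abs_sub_lt_iff]
        constructor <;> linarith [ha.1, ha.2, hb.1, hb.2]
      nlinarith [Real.pi_gt_three]
    ext
    simpa [hk0] using hr
  · intro t
    simp [Complex.norm_exp]

/-- A polynomial vanishing on the torus is zero. -/
lemma torus_dense : ∀ (n : ℕ) (f : MvPolynomial (Fin n) ℂ),
    (∀ z : Fin n → ℂ, (∀ i, ‖z i‖ = 1) → MvPolynomial.eval z f = 0) → f = 0 := by
  intro n
  induction n with
  | zero =>
    intro f hf
    have := hf (fun i => i.elim0) (fun i => i.elim0)
    rw [MvPolynomial.eq_C_of_isEmpty f] at this ⊢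
    simpa using this
  | succ n ih =>
    intro f hf
    have key : ∀ k, (MvPolynomial.finSuccEquiv ℂ n f).coeff k = 0 := by
      intro k
      apply ih
      intro s hs
      have hpz : Polynomial.map (MvPolynomial.eval s) (MvPolynomial.finSuccEquiv ℂ n f) = 0 := by
        apply Polynomial.eq_zero_of_infinite_isRoot
        apply circle_infinite.mono
        intro y hy
        simp only [Set.mem_setOf_eq, Polynomial.IsRoot] at hy ⊢
        rw [← MvPolynomial.eval_eq_eval_mv_eval']
        apply hf
        intro i
        refine Fin.cases ?_ ?_ i
        · simpa using hy
        · intro j; simpa using hs j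
      have := congrArg (fun P => Polynomial.coeff P k) hpz
      simpa using this
    have : MvPolynomial.finSuccEquiv ℂ n f = 0 := Polynomial.ext (by simpa using key)
    exact (map_eq_zero_iff _ (AlgEquiv.injective _)).mp this

/-- The "reversal" of `f` at multidegree `D`. -/
noncomputable def mirror {n : ℕ} (D : Fin n →₀ ℕ) (f : MvPolynomial (Fin n) ℂ) :
    MvPolynomial (Fin n) ℂ :=
  ∑ a ∈ f.support, MvPolynomial.monomial (D - a) (starRingEnd ℂ (f.coeff a))

lemma eval_mirror {n : ℕ} (D : Fin n →₀ ℕ) (f : MvPolynomial (Fin n) ℂ)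
    (hD : ∀ a ∈ f.support, a ≤ D) (z : Fin n → ℂ) (hz : ∀ i, z i ≠ 0) :
    MvPolynomial.eval z (mirror D f) =
      (∏ i, z i ^ D i) *
        MvPolynomial.eval (fun i => (z i)⁻¹) (MvPolynomial.map (starRingEnd ℂ) f) := by
  have hsupp : (MvPolynomial.map (starRingEnd ℂ) f).support = f.support :=
    MvPolynomial.support_map_of_injective _ (RingHom.injective _)
  rw [MvPolynomial.eval_eq' (fun i => (z i)⁻¹)]
  rw [mirror, map_sum, hsupp, Finset.mul_sum]
  apply Finset.sum_congr rfl
  intro a ha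
  rw [MvPolynomial.eval_monomial, MvPolynomial.coeff_map, Finsupp.prod_pow]
  have hterm : ∀ i, z i ^ ((D - a) i) = z i ^ D i * ((z i)⁻¹) ^ a i := by
    intro i
    have hle : a i ≤ D i := (hD a ha) i
    rw [Finsupp.tsub_apply, pow_sub₀ _ (hz i) hle, inv_pow]
  calc (starRingEnd ℂ) (MvPolynomial.coeff a f) * ∏ i, z i ^ (D - a) i
      = (starRingEnd ℂ) (MvPolynomial.coeff a f) *
        ∏ i, z i ^ D i * ((z i)⁻¹) ^ a i := by
        congr 1; exact Finset.prod_congr rfl fun i _ => hterm i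
    _ = (∏ i, z i ^ D i) *
        ((starRingEnd ℂ) (MvPolynomial.coeff a f) * ∏ i, ((z i)⁻¹) ^ a i) := by
        rw [Finset.prod_mul_distrib]; ring


lemma conj_eval {n : ℕ} (z : Fin n → ℂ) (f : MvPolynomial (Fin n) ℂ) :
    MvPolynomial.eval (fun i => (starRingEnd ℂ) (z i)) (MvPolynomial.map (starRingEnd ℂ) f)
      = (starRingEnd ℂ) (MvPolynomial.eval z f) := by
  have h := MvPolynomial.eval₂_comp_left (starRingEnd ℂ) (RingHom.id ℂ) z f
  rw [MvPolynomial.eval₂_id] at h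
  rw [MvPolynomial.eval_map, h]
  congr 1



/-- The Laurent-polynomial identity `p(z)·p̄(z⁻¹) = q(z)·q̄(z⁻¹)` is expressed
as equality of the corresponding functions at every point of the torus `(ℂ \ {0})ⁿ`,
which is equivalent to the identity of Laurent polynomials. -/
theorem stmt_8 (n : ℕ) (p q : MvPolynomial (Fin n) ℂ) (hp : p ≠ 0) (hq : q ≠ 0)
    (h : ∀ z : Fin n → ℂ, (∀ i, ‖z i‖ = 1) → MvPolynomial.eval z q ≠ 0 →
      ‖MvPolynomial.eval z p / MvPolynomial.eval z q‖ = 1) :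
    ∀ z : Fin n → ℂ, (∀ i, z i ≠ 0) →
      MvPolynomial.eval z p *
        MvPolynomial.eval (fun i => (z i)⁻¹) (MvPolynomial.map (starRingEnd ℂ) p) =
      MvPolynomial.eval z q *
        MvPolynomial.eval (fun i => (z i)⁻¹) (MvPolynomial.map (starRingEnd ℂ) q) := by
  classical
  set D : Fin n →₀ ℕ := (p.support ∪ q.support).sup id with hDdef
  have hDp : ∀ a ∈ p.support, a ≤ D :=
    fun a ha => Finset.le_sup (f := id) (Finset.mem_union_left _ ha)
  have hDq : ∀ a ∈ q.support, a ≤ D :=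
    fun a ha => Finset.le_sup (f := id) (Finset.mem_union_right _ ha)
  set P : MvPolynomial (Fin n) ℂ := p * mirror D p - q * mirror D q with hPdef
  have hP0 : P = 0 := by
    have hPq : P * q = 0 := by
      apply torus_dense
      intro z hzT
      rw [map_mul]
      by_cases hq0 : MvPolynomial.eval z q = 0
      · rw [hq0, mul_zero]
      have hz : ∀ i, z i ≠ 0 := by
        intro i hzi
        have := hzT i
        rw [hzi] at this; simp at this
      have hinv : (fun i => (z i)⁻¹) = fun i => (starRingEnd ℂ) (z i) := by
        funext i
        apply inv_eq_of_mul_eq_one_right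
        rw [Complex.mul_conj]
        norm_cast
        rw [Complex.normSq_eq_norm_sq, hzT i, one_pow]
      have habs : ‖MvPolynomial.eval z p‖ = ‖MvPolynomial.eval z q‖ := by
        have := h z hzT hq0
        rwa [norm_div, div_eq_one_iff_eq (by simpa using hq0)] at this
      have hPz : MvPolynomial.eval z P = 0 := by
        rw [hPdef, map_sub, map_mul, map_mul,
          eval_mirror D p hDp z hz, eval_mirror D q hDq z hz, hinv,
          conj_eval, conj_eval]
        have key : MvPolynomial.eval z p * (starRingEnd ℂ) (MvPolynomial.eval z p)
            = MvPolynomial.eval z q * (starRingEnd ℂ) (MvPolynomial.eval z q) := by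
          rw [Complex.mul_conj, Complex.mul_conj]
          norm_cast
          rw [Complex.normSq_eq_norm_sq, Complex.normSq_eq_norm_sq, habs]
        linear_combination (∏ i, z i ^ D i) * key
      rw [hPz, zero_mul]
    rcases mul_eq_zero.mp hPq with h' | h'
    · exact h'
    · exact absurd h' hq
  intro z hz
  have hzD : (∏ i, z i ^ D i) ≠ 0 :=
    Finset.prod_ne_zero_iff.mpr fun i _ => pow_ne_zero _ (hz i)
  have hPz : MvPolynomial.eval z P = 0 := by rw [hP0, map_zero]
  rw [hPdef, map_sub, map_mul, map_mul,
    eval_mirror D p hDp z hz, eval_mirror D q hDq z hz] at hPz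
  apply mul_left_cancel₀ hzD
  have : (∏ i, z i ^ D i) * (MvPolynomial.eval z p *
      MvPolynomial.eval (fun i => (z i)⁻¹) (MvPolynomial.map (starRingEnd ℂ) p)) -
    (∏ i, z i ^ D i) * (MvPolynomial.eval z q *
      MvPolynomial.eval (fun i => (z i)⁻¹) (MvPolynomial.map (starRingEnd ℂ) q)) = 0 := by
    rw [← hPz]; ring
  linear_combination this
end

section
/- Let V ⊆ (ℂ \ {0})ⁿ be the zero set of a family of polynomials, and define V* as the image of V under the map z ↦ conj(z)⁻¹ applied coordinatewise. If V ∩ S₁ⁿ is Zariski dense in V, then V = V*. -/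
/-- `V` is the zero set in `(ℂ \ {0})ⁿ` of a family `P` of polynomials,
`V*` is its image under the coordinatewise map `z ↦ (conj z)⁻¹`. -/
theorem stmt_11 (n : ℕ) (P : Set (MvPolynomial (Fin n) ℂ))
    (V : Set (Fin n → ℂ))
    (hV : V = {z | (∀ i, z i ≠ 0) ∧ ∀ p ∈ P, MvPolynomial.eval z p = 0})
    (hdense : ∀ p : MvPolynomial (Fin n) ℂ,
      (∀ z ∈ V ∩ {z | ∀ i, ‖z i‖ = 1}, MvPolynomial.eval z p = 0) →
      ∀ z ∈ V, MvPolynomial.eval z p = 0) :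
    V = (fun z : Fin n → ℂ => fun i => ((starRingEnd ℂ) (z i))⁻¹) '' V := by
  classical
  set σf : (Fin n → ℂ) → (Fin n → ℂ) := fun z i => ((starRingEnd ℂ) (z i))⁻¹ with hσf
  have hσσ : ∀ z, σf (σf z) = z := by
    intro z; funext i; simp [σf, map_inv₀]
  -- conjugation relation: conj (eval (σf w) p) = eval (fun i => (w i)⁻¹) (map conj p)
  have hconj : ∀ (w : Fin n → ℂ) (p : MvPolynomial (Fin n) ℂ),
      (starRingEnd ℂ) (MvPolynomial.eval (σf w) p)
        = MvPolynomial.eval (fun i => (w i)⁻¹) (MvPolynomial.map (starRingEnd ℂ) p) := by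
    intro w p
    rw [MvPolynomial.eval_map]
    have : MvPolynomial.eval (σf w) p = MvPolynomial.eval₂ (RingHom.id ℂ) (σf w) p := rfl
    rw [this, MvPolynomial.eval₂_comp_left (starRingEnd ℂ) (RingHom.id ℂ) (σf w) p]
    congr 1
    funext i
    simp [σf, map_inv₀]
  have key : ∀ z ∈ V, σf z ∈ V := by
    intro z hzV
    have hz := hV ▸ hzV
    obtain ⟨hz0, hzP⟩ := hz
    rw [hV]
    refine ⟨fun i => by simp [σf, hz0 i], ?_⟩
    intro p hp
    set p' := MvPolynomial.map (starRingEnd ℂ) p with hp'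
    set d := p'.totalDegree with hd
    set Q : MvPolynomial (Fin n) ℂ :=
      ∑ s ∈ p'.support, MvPolynomial.monomial
        (Finsupp.equivFunOnFinite.symm fun i => d - s i) (p'.coeff s) with hQ
    have hQeval : ∀ w : Fin n → ℂ, (∀ i, w i ≠ 0) →
        MvPolynomial.eval w Q =
          (∏ i, w i) ^ d * MvPolynomial.eval (fun i => (w i)⁻¹) p' := by
      intro w hw
      rw [hQ, map_sum, MvPolynomial.eval_eq', Finset.mul_sum]
      refine Finset.sum_congr rfl fun s hs => ?_
      have hle : ∀ i, s i ≤ d := by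
        intro i
        refine le_trans ?_ (MvPolynomial.le_totalDegree hs)
        by_cases h : i ∈ s.support
        · exact Finset.single_le_sum (f := fun j => s j) (fun j _ => Nat.zero_le _) h
        · simp [Finsupp.notMem_support_iff.mp h]
      rw [MvPolynomial.eval_monomial,
        Finsupp.prod_fintype _ _ (fun i => pow_zero _)]
      simp only [Finsupp.coe_equivFunOnFinite_symm]
      rw [mul_comm ((∏ i, w i) ^ d), mul_assoc]
      congr 1
      rw [← Finset.prod_pow, ← Finset.prod_mul_distrib]
      refine Finset.prod_congr rfl fun i _ => ?_
      rw [pow_sub₀ _ (hw i) (hle i), mul_comm, inv_pow]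
    have hQS : ∀ w ∈ V ∩ {z | ∀ i, ‖z i‖ = 1},
        MvPolynomial.eval w Q = 0 := by
      intro w hw
      obtain ⟨hwV, hwS⟩ := hw
      obtain ⟨hw0, hwP⟩ := hV ▸ hwV
      have hfix : σf w = w := by
        funext i
        have h1 : (starRingEnd ℂ) (w i) * w i = 1 := by
          rw [mul_comm, Complex.mul_conj]
          norm_cast
          rw [Complex.normSq_eq_norm_sq, hwS i, one_pow]
        exact inv_eq_of_mul_eq_one_right h1
      rw [hQeval w hw0, ← hconj w p, hfix, hwP p hp]
      simp
    have hQV := hdense Q hQS z hzV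
    rw [hQeval z hz0] at hQV
    have hprod : (∏ i, z i) ^ d ≠ 0 :=
      pow_ne_zero _ (Finset.prod_ne_zero_iff.mpr fun i _ => hz0 i)
    have h0 : MvPolynomial.eval (fun i => (z i)⁻¹) p' = 0 := by
      rcases mul_eq_zero.mp hQV with h | h
      · exact absurd h hprod
      · exact h
    have := hconj z p
    rw [h0] at this
    exact (starRingEnd ℂ).injective (by simpa using this)
  ext z
  constructor
  · intro hz
    exact ⟨σf z, key z hz, hσσ z⟩
  · rintro ⟨w, hw, rfl⟩
    exact key w hw
end

section
/- The map t ↦ (exp(i t), exp(i t²)) for t ∈ [0,1] has Zariski dense image in ℂ²: if a polynomial p ∈ ℂ[z,w] satisfies p(exp(it), exp(it²)) = 0 for all t ∈ [0,1], then p = 0. -/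
open Complex Filter Finset

set_option maxHeartbeats 1000000 in
theorem stmt_18 (p : MvPolynomial (Fin 2) ℂ)
    (h : ∀ t : ℝ, t ∈ Set.Icc (0 : ℝ) 1 →
      MvPolynomial.eval
        ![Complex.exp (Complex.I * t), Complex.exp (Complex.I * (t : ℂ) ^ 2)] p = 0) :
    p = 0 := by
  set F : ℂ → ℂ := fun z =>
    MvPolynomial.eval ![Complex.exp (Complex.I * z), Complex.exp (Complex.I * z ^ 2)] p with hFdef
  have hFeq : ∀ z : ℂ, F z = ∑ d ∈ p.support,
      MvPolynomial.coeff d p * Complex.exp (Complex.I * z) ^ (d 0)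
        * Complex.exp (Complex.I * z ^ 2) ^ (d 1) := by
    intro z
    rw [hFdef]
    dsimp only
    rw [MvPolynomial.eval_eq']
    refine Finset.sum_congr rfl fun d _ => ?_
    rw [Fin.prod_univ_two]
    simp [mul_assoc, MvPolynomial.coeff]
  have hdiff : Differentiable ℂ F := by
    have : F = fun z => ∑ d ∈ p.support,
        MvPolynomial.coeff d p * Complex.exp (Complex.I * z) ^ (d 0)
          * Complex.exp (Complex.I * z ^ 2) ^ (d 1) := funext hFeq
    rw [this]
    apply Differentiable.fun_sum
    intro d _
    fun_prop
  clear_value F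
  -- F vanishes on a sequence converging to 0
  have hfreq : ∃ᶠ z in nhdsWithin (0 : ℂ) {(0:ℂ)}ᶜ, F z = 0 := by
    have hseq : Tendsto (fun n : ℕ => ((1 / (n + 1) : ℝ) : ℂ)) atTop
        (nhdsWithin (0 : ℂ) {(0:ℂ)}ᶜ) := by
      apply tendsto_nhdsWithin_of_tendsto_nhds_of_eventually_within
      · have h1 : Tendsto (fun n : ℕ => (1 / (n + 1) : ℝ)) atTop (nhds 0) :=
          tendsto_one_div_add_atTop_nhds_zero_nat
        have := (Complex.continuous_ofReal.tendsto (0:ℝ)).comp h1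
        rw [Function.comp_def] at this
        simpa using this
      · filter_upwards with n
        simp only [Set.mem_compl_iff, Set.mem_singleton_iff]
        intro hc
        have : (1 / (n + 1) : ℝ) = 0 := by exact_mod_cast hc
        have hpos : (0:ℝ) < 1 / (n + 1) := by positivity
        linarith
    refine hseq.frequently (Frequently.of_forall fun n => ?_)
    have hmem : (1 / (n + 1) : ℝ) ∈ Set.Icc (0:ℝ) 1 := by
      constructor
      · positivity
      · rw [div_le_one (by positivity)]
        linarith [Nat.cast_nonneg (α := ℝ) n]
    have := h _ hmem
    rw [hFdef]
    simpa using this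
  have hF0 : ∀ z : ℂ, F z = 0 := by
    have hA : AnalyticOnNhd ℂ F Set.univ := by
      rw [analyticOnNhd_univ_iff_differentiable]; exact hdiff
    intro z
    exact hA.eqOn_zero_of_preconnected_of_frequently_eq_zero isPreconnected_univ
      (Set.mem_univ 0) hfreq (Set.mem_univ z)
  -- now the growth argument
  by_contra hp
  have hsup : p.support.Nonempty := by
    rw [Finset.nonempty_iff_ne_empty]
    intro hc
    exact hp (MvPolynomial.support_eq_empty.mp hc)
  obtain ⟨d₀, hd₀mem, hd₀max⟩ := Finset.exists_max_image p.support
    (fun d => toLex ((d 1 : ℕ), (d 0 : ℕ))) hsup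
  obtain ⟨α, ω, hIω, hω2, hαre⟩ : ∃ α ω : ℂ, Complex.I * ω = α ∧ ω ^ 2 = -Complex.I ∧
      α.re = (Real.sqrt 2)⁻¹ := by
    have h2 : (Real.sqrt 2 : ℂ) ^ 2 = 2 := by
      norm_cast
      exact_mod_cast Real.sq_sqrt (by norm_num)
    have hs2 : (Real.sqrt 2 : ℂ) ≠ 0 := by
      intro hc
      have : Real.sqrt 2 = 0 := by exact_mod_cast hc
      have := Real.sqrt_pos.mpr (show (0:ℝ) < 2 by norm_num)
      linarith
    refine ⟨(1 + Complex.I) / (Real.sqrt 2 : ℂ), (1 - Complex.I) / (Real.sqrt 2 : ℂ), ?_, ?_, ?_⟩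
    · field_simp
      rw [mul_sub, mul_one, Complex.I_mul_I]
      ring
    · rw [div_pow, h2]
      rw [show (1 - Complex.I) ^ 2 = -2 * Complex.I by
        rw [sub_sq, Complex.I_sq]; ring]
      ring
    · rw [Complex.div_ofReal_re]
      simp [one_div]
  obtain ⟨T, hT⟩ : ∃ T : (Fin 2 →₀ ℕ) → ℝ → ℂ, ∀ d s, T d s =
      MvPolynomial.coeff d p *
        Complex.exp ((((d 0 : ℝ) - (d₀ 0 : ℝ)) * s : ℝ) * α
          + ((((d 1 : ℝ) - (d₀ 1 : ℝ)) * s ^ 2 : ℝ) : ℂ)) := ⟨_, fun _ _ => rfl⟩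
  have key : ∀ s : ℝ, ∑ d ∈ p.support, T d s = 0 := by
    intro s
    have : ∑ d ∈ p.support, T d s
        = F (ω * s) * Complex.exp (-((((d₀ 0 : ℕ):ℝ) * s : ℝ) * α)
            - ((((d₀ 1 : ℕ):ℝ) * s ^ 2 : ℝ) : ℂ)) := by
      rw [hFeq, Finset.sum_mul]
      refine Finset.sum_congr rfl fun d _ => ?_
      rw [hT]
      have e1 : Complex.exp (Complex.I * (ω * s)) ^ (d 0)
          = Complex.exp ((d 0 : ℂ) * ((s:ℂ) * α)) := by
        rw [← Complex.exp_nat_mul]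
        congr 1
        rw [← hIω]; ring
      have e2 : Complex.exp (Complex.I * (ω * s) ^ 2) ^ (d 1)
          = Complex.exp ((d 1 : ℂ) * (s:ℂ) ^ 2) := by
        rw [← Complex.exp_nat_mul]
        congr 1
        rw [mul_pow, hω2]
        rw [show Complex.I * (-Complex.I * (s:ℂ)^2) = (s:ℂ)^2 by
          rw [← mul_assoc]; simp [Complex.I_mul_I]]
      rw [e1, e2, mul_assoc, ← Complex.exp_add, mul_assoc, ← Complex.exp_add]
      congr 1
      push_cast
      ring
    rw [this, hF0, zero_mul]
  -- limit of the sum is the top coefficient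
  have hlim : Tendsto (fun s : ℝ => ∑ d ∈ p.support, T d s) atTop
      (nhds (MvPolynomial.coeff d₀ p)) := by
    have main : Tendsto (fun s : ℝ => ∑ d ∈ p.support, T d s) atTop
        (nhds (∑ d ∈ p.support, if d = d₀ then MvPolynomial.coeff d₀ p else 0)) := by
      apply tendsto_finset_sum
      intro d hd
      by_cases hdd : d = d₀
      · subst hdd
        simp only [if_pos rfl]
        have hz : ∀ s : ℝ, T d s = MvPolynomial.coeff d p := by
          intro s
          rw [hT]
          simp [Complex.exp_zero]
        exact Tendsto.congr (fun s => (hz s).symm) tendsto_const_nhds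
      · simp only [if_neg hdd]
        rw [tendsto_zero_iff_norm_tendsto_zero]
        have hnorm : ∀ s : ℝ, ‖T d s‖ = ‖MvPolynomial.coeff d p‖ *
            Real.exp (((d 0 : ℝ) - (d₀ 0 : ℝ)) * s * (Real.sqrt 2)⁻¹
              + ((d 1 : ℝ) - (d₀ 1 : ℝ)) * s ^ 2) := by
          intro s
          rw [hT]
          rw [norm_mul, Complex.norm_exp]
          congr 1
          rw [Complex.add_re, Complex.re_ofReal_mul, Complex.ofReal_re, hαre]
        simp only [hnorm]
        rw [← mul_zero ‖MvPolynomial.coeff d p‖]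
        apply Tendsto.const_mul
        apply Real.tendsto_exp_atBot.comp
        have hlex := hd₀max d hd
        rw [Prod.Lex.le_iff] at hlex
        rcases hlex with hlt | ⟨heq, hle⟩
        · have hy : ((d 1 : ℝ) - (d₀ 1 : ℝ)) < 0 := by
            have : (d 1 : ℝ) < (d₀ 1 : ℝ) := by exact_mod_cast hlt
            linarith
          have h1 : Tendsto (fun s : ℝ => ((d 0 : ℝ) - (d₀ 0 : ℝ)) * (Real.sqrt 2)⁻¹
              + ((d 1 : ℝ) - (d₀ 1 : ℝ)) * s) atTop atBot := by
            apply tendsto_atBot_add_const_left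
            exact Tendsto.const_mul_atTop_of_neg hy tendsto_id
          have h2 := Tendsto.atTop_mul_atBot₀ tendsto_id h1
          apply h2.congr'
          filter_upwards with s
          simp only [id_eq]
          ring
        · have heq1 : (d 1 : ℕ) = d₀ 1 := heq
          have hlt0 : (d 0 : ℕ) < d₀ 0 := by
            rcases lt_or_eq_of_le hle with h' | h'
            · exact h'
            · exfalso
              apply hdd
              ext i
              fin_cases i
              · exact h'
              · exact heq1
          have hy0 : ((d 1 : ℝ) - (d₀ 1 : ℝ)) = 0 := by
            rw [heq1]; ring
          have hx : ((d 0 : ℝ) - (d₀ 0 : ℝ)) * (Real.sqrt 2)⁻¹ < 0 := by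
            apply mul_neg_of_neg_of_pos
            · have : (d 0 : ℝ) < (d₀ 0 : ℝ) := by exact_mod_cast hlt0
              linarith
            · rw [inv_pos]
              exact Real.sqrt_pos.mpr (by norm_num)
          have h1 : Tendsto (fun s : ℝ => ((d 0 : ℝ) - (d₀ 0 : ℝ)) * (Real.sqrt 2)⁻¹ * s)
              atTop atBot := Tendsto.const_mul_atTop_of_neg hx tendsto_id
          apply h1.congr'
          filter_upwards with s
          rw [hy0]
          ring
    have : (∑ d ∈ p.support, if d = d₀ then MvPolynomial.coeff d₀ p else 0)
        = MvPolynomial.coeff d₀ p := by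
      rw [Finset.sum_ite_eq' p.support d₀ (fun _ => MvPolynomial.coeff d₀ p)]
      simp [hd₀mem]
    rwa [this] at main
  have hc0 : MvPolynomial.coeff d₀ p = 0 := by
    have h0 : Tendsto (fun s : ℝ => ∑ d ∈ p.support, T d s) atTop (nhds 0) := by
      simp only [key]
      exact tendsto_const_nhds
    exact tendsto_nhds_unique hlim h0
  exact (MvPolynomial.mem_support_iff.mp hd₀mem) hc0
end
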